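/- Let h : [0,∞) → [0,∞) be superadditive (h(a+b) ≥ h(a) + h(b) for all a, b ≥ 0), strictly positive and twice continuously differentiable on (0,∞), with (log h)''(t) < 0 for all t > 0. Then for all n×n positive semidefinite complex matrices A, B, det(h(A+B))^{1/n} ≥ det(h(A))^{1/n} + det(h(B))^{1/n}. -/

import Mathlib

/-!
Diagonalise `A + B = U diag(γ) Uᴴ`. The diagonals `a`, `b` of `Uᴴ A U` and `Uᴴ B U` add up to `γ`,
and by Schur's argument they are the images of the spectra `α`, `β` of `A`, `B` under doubly
stochastic matrices (the squared moduli of the entries of a unitary matrix). Jensen's inequality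
for the concave function `log ∘ h` then gives `∏ h(α) ≤ ∏ h(a)`, trivially so when some `α_j = 0`,
since superadditivity and nonnegativity force `h 0 = 0`. Finally
`(∏ h(a))^{1/n} + (∏ h(b))^{1/n} ≤ (∏ (h(a) + h(b)))^{1/n} ≤ (∏ h(γ))^{1/n}`, by the
superadditivity of the geometric mean (AM–GM applied to `a_i / (a_i + b_i)` and `b_i / (a_i + b_i)`)
and of `h`.
-/

open scoped Matrix ComplexOrder

open Finset Matrix

namespace Real

variable {ι : Type*} [Fintype ι] [Nonempty ι]

theorem prod_rpow_le_sum_div_mul_prod_add_rpow (x y : ι → ℝ) (hx : ∀ i, 0 ≤ x i)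
    (hy : ∀ i, 0 ≤ y i) :
    (∏ i, x i) ^ (1 / (Fintype.card ι : ℝ)) ≤
      (∑ i, x i / (x i + y i)) / Fintype.card ι *
        (∏ i, (x i + y i)) ^ (1 / (Fintype.card ι : ℝ)) := by
  have hxy : ∀ i, 0 ≤ x i + y i := fun i => add_nonneg (hx i) (hy i)
  have hsplit : ∏ i, x i = (∏ i, x i / (x i + y i)) * ∏ i, (x i + y i) := by
    rw [← prod_mul_distrib]
    refine prod_congr rfl fun i _ => (div_mul_cancel_of_imp fun h => ?_).symm
    linarith [hx i, hy i]
  have amgm := geom_mean_le_arith_mean univ (fun _ => 1) (fun i => x i / (x i + y i))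
    (fun _ _ => zero_le_one) (by simp [Fintype.card_pos]) (fun i _ => div_nonneg (hx i) (hxy i))
  simp only [rpow_one, sum_const, card_univ, nsmul_eq_mul, mul_one, one_mul] at amgm
  have hP : 0 ≤ ∏ i, (x i + y i) := prod_nonneg fun i _ => hxy i
  rw [hsplit, mul_rpow (prod_nonneg fun i _ => div_nonneg (hx i) (hxy i)) hP, one_div]
  exact mul_le_mul_of_nonneg_right amgm (rpow_nonneg hP _)

theorem prod_rpow_add_prod_rpow_le (x y : ι → ℝ) (hx : ∀ i, 0 ≤ x i) (hy : ∀ i, 0 ≤ y i) :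
    (∏ i, x i) ^ (1 / (Fintype.card ι : ℝ)) + (∏ i, y i) ^ (1 / (Fintype.card ι : ℝ)) ≤
      (∏ i, (x i + y i)) ^ (1 / (Fintype.card ι : ℝ)) := by
  set G := (∏ i, (x i + y i)) ^ (1 / (Fintype.card ι : ℝ))
  have hG : 0 ≤ G := rpow_nonneg (prod_nonneg fun i _ => add_nonneg (hx i) (hy i)) _
  have hweights : (∑ i, x i / (x i + y i)) / Fintype.card ι +
      (∑ i, y i / (y i + x i)) / Fintype.card ι ≤ 1 := by
    rw [← add_div, ← sum_add_distrib, div_le_one (by simp [Fintype.card_pos])]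
    simpa [add_comm (y _), ← add_div] using
      sum_le_card_nsmul univ _ (1 : ℝ) fun i _ => div_self_le_one (x i + y i)
  calc _ ≤ (∑ i, x i / (x i + y i)) / Fintype.card ι * G
        + (∑ i, y i / (y i + x i)) / Fintype.card ι * G := by
        gcongr
        · exact prod_rpow_le_sum_div_mul_prod_add_rpow x y hx hy
        · simpa only [G, add_comm (y _)] using prod_rpow_le_sum_div_mul_prod_add_rpow y x hy hx
    _ ≤ G := by
      rw [← add_mul]
      exact mul_le_of_le_one_left hG hweights

end Real

section DoublyStochastic

variable {ι : Type*} [Fintype ι] [DecidableEq ι] {M : Matrix ι ι ℝ}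

theorem Convex.mulVec_mem_of_mem_doublyStochastic {s : Set ℝ} (hs : Convex ℝ s)
    (hM : M ∈ doublyStochastic ℝ ι) {x : ι → ℝ} (hx : ∀ i, x i ∈ s) (i : ι) :
    (M *ᵥ x) i ∈ s :=
  hs.sum_mem (fun _ _ => nonneg_of_mem_doublyStochastic hM)
    (sum_row_of_mem_doublyStochastic hM i) fun j _ => hx j

theorem ConcaveOn.sum_le_sum_mulVec_of_mem_doublyStochastic {s : Set ℝ} {f : ℝ → ℝ}
    (hf : ConcaveOn ℝ s f) (hM : M ∈ doublyStochastic ℝ ι) {x : ι → ℝ} (hx : ∀ i, x i ∈ s) :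
    ∑ i, f (x i) ≤ ∑ i, f ((M *ᵥ x) i) :=
  calc ∑ j, f (x j) = ∑ i, ∑ j, M i j * f (x j) := by
        rw [sum_comm]
        simp [← sum_mul, sum_col_of_mem_doublyStochastic hM]
    _ ≤ ∑ i, f ((M *ᵥ x) i) := sum_le_sum fun i _ =>
        hf.le_map_sum (fun _ _ => nonneg_of_mem_doublyStochastic hM)
          (sum_row_of_mem_doublyStochastic hM i) fun j _ => hx j

variable {h : ℝ → ℝ}

theorem prod_le_prod_mulVec_of_mem_doublyStochastic (h_nonneg : ∀ x ∈ Set.Ici (0:ℝ), 0 ≤ h x)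
    (h_zero : h 0 = 0) (h_pos : ∀ t ∈ Set.Ioi (0:ℝ), 0 < h t)
    (h_logconcave : ConcaveOn ℝ (Set.Ioi 0) fun t => Real.log (h t))
    (hM : M ∈ doublyStochastic ℝ ι) {x : ι → ℝ} (hx : ∀ i, 0 ≤ x i) :
    ∏ i, h (x i) ≤ ∏ i, h ((M *ᵥ x) i) := by
  by_cases! hx0 : ∃ i, x i = 0
  · obtain ⟨i, hi⟩ := hx0
    rw [prod_eq_zero (mem_univ i) (by rw [hi, h_zero])]
    exact prod_nonneg fun j _ =>
      h_nonneg _ ((convex_Ici 0).mulVec_mem_of_mem_doublyStochastic hM hx j)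
  · have hxpos : ∀ i, x i ∈ Set.Ioi 0 := fun i => (hx i).lt_of_ne' (hx0 i)
    have hMx := (convex_Ioi 0).mulVec_mem_of_mem_doublyStochastic hM hxpos
    rw [← Real.log_le_log_iff (prod_pos fun i _ => h_pos _ (hxpos i))
      (prod_pos fun i _ => h_pos _ (hMx i)), Real.log_prod fun i _ => (h_pos _ (hxpos i)).ne',
      Real.log_prod fun i _ => (h_pos _ (hMx i)).ne']
    exact h_logconcave.sum_le_sum_mulVec_of_mem_doublyStochastic hM hxpos

theorem prod_rpow_add_prod_rpow_le_prod_mulVec_add_mulVec [Nonempty ι]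
    (h_nonneg : ∀ x ∈ Set.Ici (0:ℝ), 0 ≤ h x)
    (h_superadd : ∀ a b : ℝ, 0 ≤ a → 0 ≤ b → h a + h b ≤ h (a + b))
    (h_pos : ∀ t ∈ Set.Ioi (0:ℝ), 0 < h t)
    (h_logconcave : ConcaveOn ℝ (Set.Ioi 0) fun t => Real.log (h t))
    {N : Matrix ι ι ℝ} (hM : M ∈ doublyStochastic ℝ ι) (hN : N ∈ doublyStochastic ℝ ι)
    {x y : ι → ℝ} (hx : ∀ i, 0 ≤ x i) (hy : ∀ i, 0 ≤ y i) :
    (∏ i, h (x i)) ^ (1 / (Fintype.card ι : ℝ)) + (∏ i, h (y i)) ^ (1 / (Fintype.card ι : ℝ)) ≤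
      (∏ i, h ((M *ᵥ x + N *ᵥ y) i)) ^ (1 / (Fintype.card ι : ℝ)) := by
  have h_zero : h 0 = 0 := by
    have h00 := h_superadd 0 0 le_rfl le_rfl
    rw [add_zero] at h00
    linarith [h_nonneg 0 Set.self_mem_Ici]
  have hMx := (convex_Ici 0).mulVec_mem_of_mem_doublyStochastic hM hx
  have hNy := (convex_Ici 0).mulVec_mem_of_mem_doublyStochastic hN hy
  have hhMx i : 0 ≤ h ((M *ᵥ x) i) := h_nonneg _ (hMx i)
  have hhNy i : 0 ≤ h ((N *ᵥ y) i) := h_nonneg _ (hNy i)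
  have hexp : 0 ≤ 1 / (Fintype.card ι : ℝ) := by positivity
  calc _ ≤ (∏ i, h ((M *ᵥ x) i)) ^ (1 / (Fintype.card ι : ℝ)) +
        (∏ i, h ((N *ᵥ y) i)) ^ (1 / (Fintype.card ι : ℝ)) :=
        add_le_add
          (Real.rpow_le_rpow (prod_nonneg fun i _ => h_nonneg _ (hx i))
            (prod_le_prod_mulVec_of_mem_doublyStochastic h_nonneg h_zero h_pos h_logconcave hM hx)
            hexp)
          (Real.rpow_le_rpow (prod_nonneg fun i _ => h_nonneg _ (hy i))
            (prod_le_prod_mulVec_of_mem_doublyStochastic h_nonneg h_zero h_pos h_logconcave hN hy)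
            hexp)
    _ ≤ (∏ i, (h ((M *ᵥ x) i) + h ((N *ᵥ y) i))) ^ (1 / (Fintype.card ι : ℝ)) :=
        Real.prod_rpow_add_prod_rpow_le _ _ hhMx hhNy
    _ ≤ _ :=
        Real.rpow_le_rpow (prod_nonneg fun i _ => add_nonneg (hhMx i) (hhNy i))
          (prod_le_prod (fun i _ => add_nonneg (hhMx i) (hhNy i))
            fun i _ => h_superadd _ _ (hMx i) (hNy i))
          hexp

end DoublyStochastic

namespace Matrix

variable {ι 𝕜 : Type*} [Fintype ι] [DecidableEq ι] [RCLike 𝕜]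

theorem norm_sq_mem_doublyStochastic {U : Matrix ι ι 𝕜} (hU : U ∈ unitaryGroup ι 𝕜) :
    (of fun i j => ‖U i j‖ ^ 2) ∈ doublyStochastic ℝ ι := by
  refine mem_doublyStochastic_iff_sum.2 ⟨fun i j => sq_nonneg _, fun i => ?_, fun j => ?_⟩
  · have := congr_fun (congr_fun ((mem_unitaryGroup_iff).1 hU) i) i
    simp only [mul_apply, star_apply, RCLike.star_def, RCLike.mul_conj, one_apply_eq] at this
    exact_mod_cast this
  · have := congr_fun (congr_fun ((mem_unitaryGroup_iff').1 hU) j) j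
    simp only [mul_apply, star_apply, RCLike.star_def, RCLike.conj_mul, one_apply_eq] at this
    exact_mod_cast this

theorem mul_diagonal_mul_conjTranspose_apply_self (W : Matrix ι ι 𝕜) (d : ι → ℝ) (i : ι) :
    (W * diagonal (fun j => (d j : 𝕜)) * Wᴴ) i i = ((∑ j, ‖W i j‖ ^ 2 * d j : ℝ) : 𝕜) := by
  rw [mul_apply]
  simp only [mul_diagonal, conjTranspose_apply, RCLike.star_def]
  push_cast
  refine sum_congr rfl fun j _ => ?_
  rw [← RCLike.mul_conj]
  ring

namespace IsHermitian

variable {A B : Matrix ι ι 𝕜}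

theorem conjTranspose_mul_mul_apply_self (hA : A.IsHermitian) (U : Matrix ι ι 𝕜) (i : ι) :
    (Uᴴ * A * U) i i =
      ((∑ j, ‖(Uᴴ * hA.eigenvectorUnitary) i j‖ ^ 2 * hA.eigenvalues j : ℝ) : 𝕜) := by
  rw [← mul_diagonal_mul_conjTranspose_apply_self]
  conv_lhs => rw [hA.spectral_theorem]
  simp only [Unitary.conjStarAlgAut_apply, conjTranspose_mul, conjTranspose_conjTranspose,
    Matrix.mul_assoc, star_eq_conjTranspose, Function.comp_def]

theorem exists_mem_doublyStochastic_re_diag_eq (hA : A.IsHermitian) {U : Matrix ι ι 𝕜}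
    (hU : U ∈ unitaryGroup ι 𝕜) :
    ∃ M ∈ doublyStochastic ℝ ι, (fun i => RCLike.re ((Uᴴ * A * U) i i)) = M *ᵥ hA.eigenvalues :=
  ⟨_, norm_sq_mem_doublyStochastic (mul_mem (Unitary.star_mem hU) hA.eigenvectorUnitary.2), by
    ext i
    simp [hA.conjTranspose_mul_mul_apply_self U i, mulVec, dotProduct, star_eq_conjTranspose]⟩

theorem re_conjTranspose_eigenvectorUnitary_mul_mul_apply_self (hA : A.IsHermitian) (i : ι) :
    RCLike.re (((hA.eigenvectorUnitary : Matrix ι ι 𝕜)ᴴ * A * hA.eigenvectorUnitary) i i) =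
      hA.eigenvalues i := by
  have := hA.conjStarAlgAut_star_eigenvectorUnitary
  rw [Unitary.conjStarAlgAut_star_apply] at this
  simp [← star_eq_conjTranspose, this]

theorem exists_eigenvalues_add_eq_mulVec_add_mulVec (hA : A.IsHermitian) (hB : B.IsHermitian) :
    ∃ M ∈ doublyStochastic ℝ ι, ∃ N ∈ doublyStochastic ℝ ι,
      (hA.add hB).eigenvalues = M *ᵥ hA.eigenvalues + N *ᵥ hB.eigenvalues := by
  set U := (hA.add hB).eigenvectorUnitary
  obtain ⟨M, hM, hMA⟩ := hA.exists_mem_doublyStochastic_re_diag_eq U.2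
  obtain ⟨N, hN, hNB⟩ := hB.exists_mem_doublyStochastic_re_diag_eq U.2
  refine ⟨M, hM, N, hN, funext fun i => ?_⟩
  rw [← hMA, ← hNB, ← (hA.add hB).re_conjTranspose_eigenvectorUnitary_mul_mul_apply_self i]
  simp [U, Matrix.mul_add, Matrix.add_mul]

theorem det_cfc (hA : A.IsHermitian) (f : ℝ → ℝ) :
    (cfc f A).det = ((∏ i, f (hA.eigenvalues i) : ℝ) : 𝕜) := by
  simp [hA.cfc_eq, IsHermitian.cfc, -Unitary.conjStarAlgAut_apply]

end IsHermitian

end Matrix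

/-- If `h : [0,∞) → [0,∞)` is superadditive, strictly positive and `C²`
on `(0,∞)`, and strictly log-concave there (`(log h)'' < 0`), then for positive
semidefinite `A, B` (`n ≥ 1`), `det(h(A+B))^{1/n} ≥ det(h(A))^{1/n} + det(h(B))^{1/n}`. -/
theorem det_root_logConcave_superadditive {n : ℕ} (hn : 0 < n) (h : ℝ → ℝ)
    (h_nonneg : ∀ x ∈ Set.Ici (0:ℝ), 0 ≤ h x)
    (h_superadd : ∀ a b : ℝ, 0 ≤ a → 0 ≤ b → h a + h b ≤ h (a + b))
    (h_pos : ∀ t ∈ Set.Ioi (0:ℝ), 0 < h t)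
    (h_C2 : ContDiffOn ℝ 2 h (Set.Ioi 0))
    (h_logconcave : ∀ t ∈ Set.Ioi (0:ℝ),
      deriv (deriv (fun s => Real.log (h s))) t < 0)
    (A B : Matrix (Fin n) (Fin n) ℂ) (hA : A.PosSemidef) (hB : B.PosSemidef) :
    (cfc h A).det.re ^ (1 / (n:ℝ)) + (cfc h B).det.re ^ (1 / (n:ℝ)) ≤
      (cfc h (A + B)).det.re ^ (1 / (n:ℝ)) := by
  have : Nonempty (Fin n) := Fin.pos_iff_nonempty.1 hn
  have hlog : ConcaveOn ℝ (Set.Ioi 0) fun t => Real.log (h t) :=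
    (strictConcaveOn_of_deriv2_neg' (convex_Ioi 0)
      (h_C2.continuousOn.log fun t ht => (h_pos t ht).ne') h_logconcave).concaveOn
  obtain ⟨M, hM, N, hN, hsum⟩ :=
    hA.isHermitian.exists_eigenvalues_add_eq_mulVec_add_mulVec hB.isHermitian
  rw [hA.isHermitian.det_cfc, hB.isHermitian.det_cfc, (hA.add hB).isHermitian.det_cfc]
  simp only [RCLike.ofReal_eq_complex_ofReal, Complex.ofReal_re]
  simpa only [Fintype.card_fin, hsum] using prod_rpow_add_prod_rpow_le_prod_mulVec_add_mulVec
    h_nonneg h_superadd h_pos hlog hM hN hA.eigenvalues_nonneg hB.eigenvalues_nonneg
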